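/- Let 𝔠 = {p_r > … > p_0} be a finite chain with positive integer bonds b_1, …, b_r (bond b_i for covering p_i > p_{i−1}), and let Γ_𝔠 = LS_𝔠^+ = LS_𝔠 ∩ ℚ_{≥0}^𝔠 be the LS-monoid. Then every indecomposable element u = Σ_i u_i e_{p_i} of Γ_𝔠 (indecomposable meaning u ≠ 0 and u cannot be written u = a + b with a, b ∈ Γ_𝔠 ∖{0} and min supp a ≥ max supp b) satisfies Σ_i u_i = 1. -/

import Mathlib

open scoped BigOperators

/-- Membership in the LS-lattice of a chain `p_0 < … < p_r` with bonds
`b 0, …, b (r-1)` (where `b k` is the bond of the covering `p_{k+1} > p_k`). -/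
def memLS (r : ℕ) (b : Fin r → ℕ) (a : Fin (r + 1) → ℚ) : Prop :=
  (∀ k : Fin r, ∃ z : ℤ,
      (b k : ℚ) * (∑ j : Fin (r + 1), if (k : ℕ) + 1 ≤ (j : ℕ) then a j else 0) = z) ∧
    ∃ z : ℤ, (∑ j : Fin (r + 1), a j) = z

/-- Membership in the LS-monoid `LS^+ = LS ∩ ℚ_{≥0}`. -/
def memLSplus (r : ℕ) (b : Fin r → ℕ) (a : Fin (r + 1) → ℚ) : Prop :=
  memLS r b a ∧ ∀ j, 0 ≤ a j

/-!
Let `T k = u_k + … + u_r` be the tail sums of `u`; they decrease from the integer `S = T 0`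
to `T (r+1) = 0`, and they determine `u`. If `S ≥ 2`, split `u = x + y` where `x` has tail sums
`min (T k) 1` and `y` has tail sums `T k - min (T k) 1`. Both are antitone, so `x, y ≥ 0`, and
`b * min t 1`, `b * (t - min t 1)` are integers whenever `b * t` is, so `x, y ∈ LS`. Their sums
are `1` and `S - 1`, and `x` lives where `T < 1` is reached while `y` lives where `T > 1`, so
`min supp x ≥ max supp y`, contradicting indecomposability.
-/

section TailSum

variable {M : Type*} {n : ℕ}

def tailSum [AddCommMonoid M] (a : Fin n → M) (k : ℕ) : M :=
  ∑ j : Fin n, if k ≤ (j : ℕ) then a j else 0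

def ofTailSum [AddCommGroup M] (T : ℕ → M) : Fin n → M :=
  fun j => T j - T (j + 1)

section AddCommMonoid

variable [AddCommMonoid M]

@[simp]
theorem tailSum_zero (a : Fin n → M) : tailSum a 0 = ∑ j, a j := by
  simp [tailSum]

theorem tailSum_of_le (a : Fin n → M) {k : ℕ} (hk : n ≤ k) : tailSum a k = 0 :=
  Finset.sum_eq_zero fun j _ => if_neg (by omega)

theorem tailSum_eq_add_tailSum_succ (a : Fin n → M) {k : ℕ} (hk : k < n) :
    tailSum a k = a ⟨k, hk⟩ + tailSum a (k + 1) := by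
  have split : ∀ j : Fin n, (if k ≤ (j : ℕ) then a j else 0) =
      (if j = ⟨k, hk⟩ then a j else 0) + if k + 1 ≤ (j : ℕ) then a j else 0 := fun j => by
    simp only [Fin.ext_iff]
    split_ifs <;> first | omega | simp
  rw [tailSum, Finset.sum_congr rfl fun j _ => split j, Finset.sum_add_distrib,
    Finset.sum_ite_eq', if_pos (Finset.mem_univ _), tailSum]

theorem tailSum_antitone [PartialOrder M] [IsOrderedAddMonoid M] {a : Fin n → M}
    (ha : 0 ≤ a) : Antitone (tailSum a) := fun k l hkl =>
  Finset.sum_le_sum fun j _ => by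
    by_cases hlj : l ≤ (j : ℕ)
    · rw [if_pos hlj, if_pos (hkl.trans hlj)]
    · rw [if_neg hlj]
      split_ifs
      exacts [ha j, le_rfl]

end AddCommMonoid

section AddCommGroup

variable [AddCommGroup M]

theorem tailSum_ofTailSum {T : ℕ → M} (hT : T n = 0) {k : ℕ} (hk : k ≤ n) :
    tailSum (ofTailSum (n := n) T) k = T k := by
  induction hk using Nat.decreasingInduction with
  | self => rw [tailSum_of_le _ le_rfl, hT]
  | of_succ k hkn ih => rw [tailSum_eq_add_tailSum_succ _ hkn, ih, ofTailSum, sub_add_cancel]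

theorem ofTailSum_tailSum (a : Fin n → M) : ofTailSum (tailSum a) = a :=
  funext fun j => by rw [ofTailSum, tailSum_eq_add_tailSum_succ a j.isLt, add_sub_cancel_right]

theorem ofTailSum_add (T T' : ℕ → M) :
    ofTailSum (n := n) (T + T') = ofTailSum T + ofTailSum T' :=
  funext fun j => by simp only [ofTailSum, Pi.add_apply]; abel

theorem ofTailSum_nonneg [PartialOrder M] [IsOrderedAddMonoid M] {T : ℕ → M}
    (hT : Antitone T) : 0 ≤ ofTailSum (n := n) T :=
  fun j => sub_nonneg.2 (hT (Nat.le_succ j))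

end AddCommGroup

end TailSum

section Splitting

variable {n : ℕ}

theorem exists_int_mul_min_one {b : ℕ} {t : ℚ} (h : ∃ z : ℤ, b * t = z) :
    ∃ z : ℤ, b * min t 1 = z := by
  rcases le_total t 1 with ht | ht
  · rwa [min_eq_left ht]
  · exact ⟨b, by rw [min_eq_right ht]; simp⟩

theorem exists_int_mul_sub_min_one {b : ℕ} {t : ℚ} (h : ∃ z : ℤ, b * t = z) :
    ∃ z : ℤ, b * (t - min t 1) = z := by
  obtain ⟨z, hz⟩ := h
  rcases le_total t 1 with ht | ht
  · exact ⟨0, by simp [min_eq_left ht]⟩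
  · exact ⟨z - b, by rw [min_eq_right ht]; push_cast; linarith⟩

def upperPart (u : Fin n → ℚ) : Fin n → ℚ :=
  ofTailSum fun k => min (tailSum u k) 1

def lowerPart (u : Fin n → ℚ) : Fin n → ℚ :=
  ofTailSum fun k => tailSum u k - min (tailSum u k) 1

theorem tailSum_upperPart (u : Fin n → ℚ) {k : ℕ} (hk : k ≤ n) :
    tailSum (upperPart u) k = min (tailSum u k) 1 :=
  tailSum_ofTailSum (by simp [tailSum_of_le u le_rfl]) hk

theorem tailSum_lowerPart (u : Fin n → ℚ) {k : ℕ} (hk : k ≤ n) :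
    tailSum (lowerPart u) k = tailSum u k - min (tailSum u k) 1 :=
  tailSum_ofTailSum (by simp [tailSum_of_le u le_rfl]) hk

theorem sum_upperPart (u : Fin n → ℚ) : ∑ i, upperPart u i = min (∑ i, u i) 1 := by
  rw [← tailSum_zero, tailSum_upperPart u (Nat.zero_le _), tailSum_zero]

theorem sum_lowerPart (u : Fin n → ℚ) :
    ∑ i, lowerPart u i = ∑ i, u i - min (∑ i, u i) 1 := by
  rw [← tailSum_zero, tailSum_lowerPart u (Nat.zero_le _), tailSum_zero]

theorem upperPart_add_lowerPart (u : Fin n → ℚ) : upperPart u + lowerPart u = u := by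
  rw [upperPart, lowerPart, ← ofTailSum_add]
  convert ofTailSum_tailSum u using 2
  funext k
  simp only [Pi.add_apply, add_sub_cancel]

theorem upperPart_nonneg {u : Fin n → ℚ} (hu : 0 ≤ u) : 0 ≤ upperPart u :=
  ofTailSum_nonneg fun _ _ hkl => min_le_min_right 1 (tailSum_antitone hu hkl)

theorem lowerPart_nonneg {u : Fin n → ℚ} (hu : 0 ≤ u) : 0 ≤ lowerPart u :=
  ofTailSum_nonneg fun k l hkl => by
    have := tailSum_antitone hu hkl
    rcases le_total (tailSum u k) 1 with hk | hk <;>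
      rcases le_total (tailSum u l) 1 with hl | hl <;>
      simp only [min_eq_left, min_eq_right, hk, hl] <;> linarith

theorem le_of_upperPart_ne_zero_of_lowerPart_ne_zero {u : Fin n → ℚ} (hu : 0 ≤ u) {p q : Fin n}
    (hp : upperPart u p ≠ 0) (hq : lowerPart u q ≠ 0) : q ≤ p := by
  have hT := tailSum_antitone hu
  have hp' : tailSum u (p + 1) < 1 := by
    by_contra! h
    exact hp (by
      simp [upperPart, ofTailSum, min_eq_right h, min_eq_right (h.trans (hT p.val.le_succ))])
  have hq' : 1 < tailSum u q := by
    by_contra! h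
    exact hq (by
      simp [lowerPart, ofTailSum, min_eq_left h, min_eq_left ((hT q.val.le_succ).trans h)])
  by_contra! hpq
  exact (hq'.trans_le (hT (Nat.succ_le_of_lt hpq))).not_gt hp'

end Splitting

section LSMonoid

variable {r : ℕ} {b : Fin r → ℕ}

theorem memLS_iff_tailSum {a : Fin (r + 1) → ℚ} :
    memLS r b a ↔
      (∀ k : Fin r, ∃ z : ℤ, (b k : ℚ) * tailSum a (k + 1) = z) ∧ ∃ z : ℤ, tailSum a 0 = z := by
  rw [tailSum_zero]
  rfl

theorem memLS_upperPart {u : Fin (r + 1) → ℚ} (hu : memLS r b u) : memLS r b (upperPart u) := by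
  obtain ⟨hbond, hsum⟩ := memLS_iff_tailSum.1 hu
  refine memLS_iff_tailSum.2 ⟨fun k => ?_, ?_⟩
  · rw [tailSum_upperPart u (by omega)]
    exact exists_int_mul_min_one (hbond k)
  · rw [tailSum_upperPart u (Nat.zero_le _)]
    simpa using exists_int_mul_min_one (b := 1) (by simpa using hsum)

theorem memLS_lowerPart {u : Fin (r + 1) → ℚ} (hu : memLS r b u) : memLS r b (lowerPart u) := by
  obtain ⟨hbond, hsum⟩ := memLS_iff_tailSum.1 hu
  refine memLS_iff_tailSum.2 ⟨fun k => ?_, ?_⟩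
  · rw [tailSum_lowerPart u (by omega)]
    exact exists_int_mul_sub_min_one (hbond k)
  · rw [tailSum_lowerPart u (Nat.zero_le _)]
    simpa using exists_int_mul_sub_min_one (b := 1) (by simpa using hsum)

theorem memLSplus_upperPart {u : Fin (r + 1) → ℚ} (hu : memLSplus r b u) :
    memLSplus r b (upperPart u) :=
  ⟨memLS_upperPart hu.1, upperPart_nonneg hu.2⟩

theorem memLSplus_lowerPart {u : Fin (r + 1) → ℚ} (hu : memLSplus r b u) :
    memLSplus r b (lowerPart u) :=
  ⟨memLS_lowerPart hu.1, lowerPart_nonneg hu.2⟩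

theorem one_le_sum_of_memLSplus {u : Fin (r + 1) → ℚ} (hu : memLSplus r b u) (hu0 : u ≠ 0) :
    1 ≤ ∑ i, u i := by
  obtain ⟨⟨-, z, hz⟩, hnonneg⟩ := hu
  have hpos : 0 < ∑ i, u i := by
    refine lt_of_le_of_ne (Finset.sum_nonneg fun i _ => hnonneg i) fun h => hu0 ?_
    funext i
    exact (Finset.sum_eq_zero_iff_of_nonneg fun i _ => hnonneg i).1 h.symm i (Finset.mem_univ i)
  rw [hz] at hpos ⊢
  exact_mod_cast (Int.cast_pos.1 hpos : 0 < z)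

end LSMonoid

theorem LS_monoid_indecomposable_coord_sum_one_general (r : ℕ) (b : Fin r → ℕ)
    (u : Fin (r + 1) → ℚ)
    (hu : memLSplus r b u) (hu0 : u ≠ 0)
    (hindec : ¬ ∃ x y : Fin (r + 1) → ℚ, memLSplus r b x ∧ memLSplus r b y ∧
      x ≠ 0 ∧ y ≠ 0 ∧ u = x + y ∧
      ∀ p : Fin (r + 1), x p ≠ 0 → ∀ q : Fin (r + 1), y q ≠ 0 → q ≤ p) :
    ∑ i, u i = 1 := by
  have hS := one_le_sum_of_memLSplus hu hu0
  by_contra hS1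
  have hsum_upper := sum_upperPart u
  have hsum_lower := sum_lowerPart u
  rw [min_eq_right hS] at hsum_upper hsum_lower
  refine hindec ⟨upperPart u, lowerPart u, memLSplus_upperPart hu, memLSplus_lowerPart hu,
    fun h => ?_, fun h => ?_, (upperPart_add_lowerPart u).symm,
    fun p hp q hq => le_of_upperPart_ne_zero_of_lowerPart_ne_zero hu.2 hp hq⟩
  · simp [h] at hsum_upper
  · exact hS1 (by simp [h] at hsum_lower; linarith)

/-- every indecomposable element of the LS-monoid `LS_𝔠^+` of a chain
`𝔠 = {p_r > … > p_0}` with bonds `b` has coordinate sum `1`.  Indecomposable means: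
nonzero, and not expressible as `x + y` with `x, y ∈ LS_𝔠^+ ∖ {0}` and
`min supp x ≥ max supp y`. -/
theorem LS_monoid_indecomposable_coord_sum_one (r : ℕ) (b : Fin r → ℕ)
    (hb : ∀ k, 0 < b k) (u : Fin (r + 1) → ℚ)
    (hu : memLSplus r b u) (hu0 : u ≠ 0)
    (hindec : ¬ ∃ x y : Fin (r + 1) → ℚ, memLSplus r b x ∧ memLSplus r b y ∧
      x ≠ 0 ∧ y ≠ 0 ∧ u = x + y ∧
      ∀ p : Fin (r + 1), x p ≠ 0 → ∀ q : Fin (r + 1), y q ≠ 0 → q ≤ p) :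
    ∑ i, u i = 1 :=
  LS_monoid_indecomposable_coord_sum_one_general r b u hu hu0 hindec
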